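/- Let N = 1 and write W = W₁. For every Schwartz function ψ ∈ 𝒮(ℝ, ℂ): 𝒬₁(e^{2πiy})(Wψ) = W(Bψ) where (Bψ)(t) = ψ(t+1) − ψ'(t+1), and 𝒬₁(e^{−2πiy})(Wψ) = W(B†ψ) where (B†ψ)(t) = ψ(t−1) + ψ'(t−1). -/

import Mathlib

noncomputable section

/-- Partial derivative in the first variable. -/
def pdx (φ : ℝ × ℝ → ℂ) (p : ℝ × ℝ) : ℂ := fderiv ℝ φ p (1, 0)

/-- Partial derivative in the second variable. -/
def pdy (φ : ℝ × ℝ → ℂ) (p : ℝ × ℝ) : ℂ := fderiv ℝ φ p (0, 1)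

/-- The prequantization map `𝒬_N` of the torus, acting on functions on `ℝ²`. -/
def Q (N : ℤ) (f : ℝ × ℝ → ℂ) (φ : ℝ × ℝ → ℂ) : ℝ × ℝ → ℂ := fun p =>
  (1 / (2 * (Real.pi : ℂ) * Complex.I * (N : ℂ))) *
      (pdx f p * (pdy φ p - 2 * (Real.pi : ℂ) * Complex.I * (N : ℂ) * (p.1 : ℂ) * φ p) -
        pdy f p * pdx φ p) +
    f p * φ p

/-- The Weil–Brezin–Zak transform `(W_N ψ)(x,y) = Σ_{k∈ℤ} ψ(x+k) e^{−2πiNky}`. -/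
def WBZ (N : ℤ) (ψ : ℝ → ℂ) : ℝ × ℝ → ℂ := fun p =>
  ∑' k : ℤ, ψ (p.1 + k) * Complex.exp (-(2 * (Real.pi : ℂ) * Complex.I * (N : ℂ) * (k : ℂ) * (p.2 : ℂ)))

/-!
The phase `e^{2πiNmy}` does not depend on `x`, so `𝒬_N(e^{2πiNmy}) = e^{2πiNmy} (1 - m ∂ₓ)`.
Under `W_N`, the derivative `∂ₓ` corresponds to `d/dt` (the series may be differentiated
termwise because Schwartz functions decay faster than any power), and multiplication by
`e^{2πiNmy}` corresponds to the translation `t ↦ t + m` (reindex the series by `k ↦ k + m`).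
The two identities are the cases `N = 1`, `m = ±1`.
-/

open Complex
open scoped Real SchwartzMap

theorem norm_exp_neg_two_pi_I_mul (N k : ℤ) (y : ℝ) :
    ‖exp (-(2 * π * I * N * k * y))‖ = 1 := by
  simp [norm_exp]

theorem summable_one_add_abs_int_sq_inv : Summable fun k : ℤ => ((1 + |(k : ℝ)|) ^ 2)⁻¹ := by
  refine (Real.summable_one_div_int_pow.2 one_lt_two).of_norm_bounded_eventually ?_
  filter_upwards [(Set.finite_singleton (0 : ℤ)).compl_mem_cofinite] with k hk
  have hk : (0 : ℝ) < |(k : ℝ)| := by simpa using hk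
  rw [Real.norm_of_nonneg (by positivity), one_div, ← sq_abs (k : ℝ)]
  exact inv_anti₀ (pow_pos hk 2) (by gcongr; linarith)

theorem SchwartzMap.exists_summable_bound_comp_add_int (g : 𝓢(ℝ, ℂ)) (R : ℝ) :
    ∃ u : ℤ → ℝ, Summable u ∧
      ∀ (k : ℤ) (x : ℝ), |x| ≤ R → (1 + |(k : ℝ)|) * ‖g (x + k)‖ ≤ u k := by
  set C := 2 ^ 3 * (Finset.Iic (3, 0)).sup (fun m => SchwartzMap.seminorm ℝ m.1 m.2) g
  have hC : ∀ t : ℝ, (1 + |t|) ^ 3 * ‖g t‖ ≤ C := fun t => by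
    simpa using one_add_le_sup_seminorm_apply (m := (3, 0)) (k := 3) (n := 0) le_rfl le_rfl g t
  refine ⟨fun k => (1 + R) ^ 3 * C * ((1 + |(k : ℝ)|) ^ 2)⁻¹,
    summable_one_add_abs_int_sq_inv.mul_left _, fun k x hx => ?_⟩
  -- Peetre's inequality `1 + |k| ≤ (1 + |x|) (1 + |x + k|)`
  have hpeetre : 1 + |(k : ℝ)| ≤ (1 + R) * (1 + |x + k|) := by
    have htri : |(k : ℝ)| ≤ |x + k| + |x| := by simpa using abs_sub (x + k) x
    nlinarith [abs_nonneg x, abs_nonneg (x + k)]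
  have hR : 0 ≤ 1 + R := by linarith [abs_nonneg x]
  dsimp only
  rw [← div_eq_mul_inv, le_div_iff₀ (by positivity)]
  calc (1 + |(k : ℝ)|) * ‖g (x + k)‖ * (1 + |(k : ℝ)|) ^ 2
      = (1 + |(k : ℝ)|) ^ 3 * ‖g (x + k)‖ := by ring
    _ ≤ ((1 + R) * (1 + |x + k|)) ^ 3 * ‖g (x + k)‖ := by gcongr
    _ = (1 + R) ^ 3 * ((1 + |x + k|) ^ 3 * ‖g (x + k)‖) := by ring
    _ ≤ (1 + R) ^ 3 * C := mul_le_mul_of_nonneg_left (hC _) (pow_nonneg hR 3)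

theorem SchwartzMap.summable_WBZ_term (N : ℤ) (g : 𝓢(ℝ, ℂ)) (p : ℝ × ℝ) :
    Summable fun k : ℤ => g (p.1 + k) * exp (-(2 * π * I * N * k * p.2)) := by
  obtain ⟨u, hu, hbound⟩ := g.exists_summable_bound_comp_add_int |p.1|
  refine hu.of_norm_bounded fun k => ?_
  rw [norm_mul, norm_exp_neg_two_pi_I_mul, mul_one]
  exact le_trans (le_mul_of_one_le_left (norm_nonneg _) (by simp)) (hbound k p.1 le_rfl)

theorem WBZ_sub_const_mul (N : ℤ) (f g : 𝓢(ℝ, ℂ)) (a : ℂ) (p : ℝ × ℝ) :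
    WBZ N (fun t => f t - a * g t) p = WBZ N f p - a * WBZ N g p := by
  rw [WBZ, WBZ, WBZ, ← tsum_mul_left,
    ← (f.summable_WBZ_term N p).tsum_sub ((g.summable_WBZ_term N p).mul_left a)]
  exact tsum_congr fun k => by ring

theorem exp_mul_WBZ (N m : ℤ) (g : ℝ → ℂ) (p : ℝ × ℝ) :
    exp (2 * π * I * N * m * p.2) * WBZ N g p = WBZ N (fun t => g (t + m)) p := by
  rw [WBZ, WBZ, ← tsum_mul_left, ← (Equiv.addRight m).tsum_eq]
  refine tsum_congr fun k => ?_
  simp only [Equiv.coe_addRight, Int.cast_add, add_assoc]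
  rw [mul_left_comm, ← exp_add]
  ring_nf

theorem HasDerivAt.comp_hasFDerivAt_smulRight {E F : Type*} [NormedAddCommGroup E]
    [NormedSpace ℝ E] [NormedAddCommGroup F] [NormedSpace ℝ F] {g : ℝ → F} {a : F} {f : E → ℝ}
    {f' : E →L[ℝ] ℝ} {p : E} (hg : HasDerivAt g a (f p)) (hf : HasFDerivAt f f' p) :
    HasFDerivAt (fun q => g (f q)) (f'.smulRight a) p :=
  (hasDerivAt_iff_hasFDerivAt.1 hg).comp p hf

theorem hasFDerivAt_exp_mul_snd (c : ℂ) (p : ℝ × ℝ) :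
    HasFDerivAt (fun q : ℝ × ℝ => exp (c * q.2))
      ((ContinuousLinearMap.snd ℝ ℝ ℝ).smulRight (c * exp (c * p.2))) p := by
  have h : HasDerivAt (fun y : ℝ => exp (c * y)) (c * exp (c * p.2)) p.2 := by
    simpa [mul_comm] using ((hasDerivAt_id p.2).ofReal_comp.const_mul c).cexp
  exact h.comp_hasFDerivAt_smulRight hasFDerivAt_snd

theorem Q_exp_mul_snd (N : ℤ) (c : ℂ) (φ : ℝ × ℝ → ℂ) (p : ℝ × ℝ) :
    Q N (fun q => exp (c * q.2)) φ p = exp (c * p.2) * (φ p - c / (2 * π * I * N) * pdx φ p) := by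
  have hx : pdx (fun q : ℝ × ℝ => exp (c * q.2)) p = 0 := by
    simp [pdx, (hasFDerivAt_exp_mul_snd c p).fderiv]
  have hy : pdy (fun q : ℝ × ℝ => exp (c * q.2)) p = c * exp (c * p.2) := by
    simp [pdy, (hasFDerivAt_exp_mul_snd c p).fderiv]
  rw [Q, hx, hy]
  ring

theorem norm_fst_smulRight_add_snd_smulRight_le {F : Type*} [NormedAddCommGroup F]
    [NormedSpace ℝ F] (a b : F) :
    ‖(ContinuousLinearMap.fst ℝ ℝ ℝ).smulRight a + (ContinuousLinearMap.snd ℝ ℝ ℝ).smulRight b‖ ≤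
      ‖a‖ + ‖b‖ := by
  refine (norm_add_le _ _).trans (add_le_add ?_ ?_) <;>
    rw [ContinuousLinearMap.norm_smulRight_apply]
  · exact mul_le_of_le_one_left (norm_nonneg a) (ContinuousLinearMap.norm_fst_le ℝ ℝ ℝ)
  · exact mul_le_of_le_one_left (norm_nonneg b) (ContinuousLinearMap.norm_snd_le ℝ ℝ ℝ)

def WBZTermFDeriv (N : ℤ) (ψ : ℝ → ℂ) (k : ℤ) (q : ℝ × ℝ) : ℝ × ℝ →L[ℝ] ℂ :=
  (ContinuousLinearMap.fst ℝ ℝ ℝ).smulRight (deriv ψ (q.1 + k) * exp (-(2 * π * I * N * k * q.2))) +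
    (ContinuousLinearMap.snd ℝ ℝ ℝ).smulRight
      (ψ (q.1 + k) * (-(2 * π * I * N * k) * exp (-(2 * π * I * N * k * q.2))))

theorem hasFDerivAt_WBZ_term (N : ℤ) {ψ : ℝ → ℂ} (k : ℤ) {q : ℝ × ℝ}
    (hψ : DifferentiableAt ℝ ψ (q.1 + k)) :
    HasFDerivAt (fun q : ℝ × ℝ => ψ (q.1 + k) * exp (-(2 * π * I * N * k * q.2)))
      (WBZTermFDeriv N ψ k q) q := by
  have hshift := hψ.hasDerivAt.comp_hasFDerivAt_smulRight (f := fun q : ℝ × ℝ => q.1 + k)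
    (hasFDerivAt_fst.add_const (k : ℝ))
  have hphase : HasFDerivAt (fun q : ℝ × ℝ => exp (-(2 * π * I * N * k * q.2)))
      ((ContinuousLinearMap.snd ℝ ℝ ℝ).smulRight
        (-(2 * π * I * N * k) * exp (-(2 * π * I * N * k * q.2)))) q := by
    simpa only [neg_mul] using hasFDerivAt_exp_mul_snd (-(2 * π * I * N * k)) q
  refine (hshift.mul hphase).congr_fderiv ?_
  ext <;> simp [WBZTermFDeriv]; ring

theorem norm_WBZTermFDeriv_le (N : ℤ) (ψ : ℝ → ℂ) (k : ℤ) (q : ℝ × ℝ) :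
    ‖WBZTermFDeriv N ψ k q‖ ≤
      ‖deriv ψ (q.1 + k)‖ + 2 * π * |(N : ℝ)| * |(k : ℝ)| * ‖ψ (q.1 + k)‖ := by
  refine (norm_fst_smulRight_add_snd_smulRight_le _ _).trans (le_of_eq ?_)
  simp [norm_exp_neg_two_pi_I_mul, abs_of_pos Real.pi_pos]
  ring

theorem pdx_WBZ (N : ℤ) (ψ : 𝓢(ℝ, ℂ)) (p : ℝ × ℝ) :
    pdx (WBZ N ψ) p = WBZ N (deriv ψ) p := by
  obtain ⟨u₀, hu₀, hb₀⟩ := ψ.exists_summable_bound_comp_add_int (|p.1| + 1)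
  obtain ⟨u₁, hu₁, hb₁⟩ :=
    (SchwartzMap.derivCLM ℝ ℂ ψ).exists_summable_bound_comp_add_int (|p.1| + 1)
  simp only [SchwartzMap.derivCLM_apply] at hb₁
  set c := 2 * π * |(N : ℝ)|
  have hbound : ∀ k, ∀ q ∈ Metric.ball p 1, ‖WBZTermFDeriv N ψ k q‖ ≤ (1 + c) * (u₁ k + u₀ k) := by
    intro k q hq
    have hx : |q.1| ≤ |p.1| + 1 := by
      have hq := Metric.mem_ball.1 hq
      rw [Prod.dist_eq, max_lt_iff, Real.dist_eq] at hq
      linarith [abs_sub_abs_le_abs_sub q.1 p.1, hq.1]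
    have hc : 0 ≤ c := by positivity
    have ha := norm_nonneg (deriv ψ (q.1 + k))
    have hb := norm_nonneg (ψ (q.1 + k))
    have ht := abs_nonneg (k : ℝ)
    nlinarith [norm_WBZTermFDeriv_le N ψ k q, hb₁ k q.1 hx, hb₀ k q.1 hx, mul_nonneg hc ha,
      mul_nonneg hc hb, mul_nonneg ht ha, mul_nonneg ht hb, mul_nonneg (mul_nonneg hc ht) ha]
  have hsum : Summable fun k => (1 + c) * (u₁ k + u₀ k) := (hu₁.add hu₀).mul_left _
  have hW : HasFDerivAt (WBZ N ψ) (∑' k, WBZTermFDeriv N ψ k p) p :=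
    hasFDerivAt_tsum_of_isPreconnected hsum Metric.isOpen_ball (convex_ball p 1).isPreconnected
      (fun k q _ => hasFDerivAt_WBZ_term N k ψ.differentiableAt) hbound
      (Metric.mem_ball_self one_pos) (ψ.summable_WBZ_term N p) (Metric.mem_ball_self one_pos)
  have hderiv_summable : Summable fun k => WBZTermFDeriv N ψ k p :=
    hsum.of_norm_bounded fun k => hbound k p (Metric.mem_ball_self one_pos)
  rw [pdx, hW.fderiv, ← ContinuousLinearMap.apply_apply ((1 : ℝ), (0 : ℝ)),
    ContinuousLinearMap.map_tsum _ hderiv_summable, WBZ]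
  exact tsum_congr fun k => by simp [WBZTermFDeriv]

theorem Q_exp_WBZ {N : ℤ} (hN : N ≠ 0) (ψ : 𝓢(ℝ, ℂ)) (m : ℤ) :
    Q N (fun q => exp (2 * π * I * N * m * q.2)) (WBZ N ψ) =
      WBZ N (fun t => ψ (t + m) - m * deriv ψ (t + m)) := by
  funext p
  have hcoeff : 2 * π * I * N * m / (2 * π * I * N) = (m : ℂ) := by
    field_simp [Real.pi_ne_zero, I_ne_zero, hN]
  have hlin : WBZ N (fun t => ψ t - m * deriv ψ t) p = WBZ N ψ p - m * WBZ N (deriv ψ) p :=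
    WBZ_sub_const_mul N ψ (SchwartzMap.derivCLM ℝ ℂ ψ) m p
  rw [Q_exp_mul_snd, pdx_WBZ, hcoeff, ← hlin, exp_mul_WBZ]

/-- Under the Weil–Brezin–Zak transform (with `N = 1`), `𝒬₁(e^{±2πiy})` go over to
the operators `B` and `B†` on `L²(ℝ, ℂ)`:
`(Bψ)(t) = ψ(t+1) − ψ'(t+1)`, `(B†ψ)(t) = ψ(t−1) + ψ'(t−1)`. -/
theorem wbz_intertwines_B (ψ : SchwartzMap ℝ ℂ) :
    Q 1 (fun q => Complex.exp (2 * (Real.pi : ℂ) * Complex.I * (q.2 : ℂ))) (WBZ 1 ⇑ψ) =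
        WBZ 1 (fun t : ℝ => ψ (t + 1) - deriv (⇑ψ) (t + 1)) ∧
    Q 1 (fun q => Complex.exp (-(2 * (Real.pi : ℂ) * Complex.I * (q.2 : ℂ)))) (WBZ 1 ⇑ψ) =
        WBZ 1 (fun t : ℝ => ψ (t - 1) + deriv (⇑ψ) (t - 1)) := by
  constructor
  · simpa using Q_exp_WBZ one_ne_zero ψ 1
  · simpa [sub_eq_add_neg] using Q_exp_WBZ one_ne_zero ψ (-1)
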